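/- Let G > 0 and Δ > 0 be constants and t₀ ∈ ℝ. Let ρ : [0,∞) → (0,∞) be continuous, differentiable on (0,∞) with ρ'(R) < 0 for all R > 0, and set m(R) = 4π ∫₀^R ρ(s) s² ds. Assume R³ > 2G m(R) Δ for all R > 0, define α(R) = t₀ + (2/3)·√(R³/(2G m(R)) − Δ) and r(R,t) = (2G m(R))^{1/3} · ((9/4)(t − α(R))² + Δ)^{1/3}. Then for any R₀ > 0 at which m(R₀)·α'(R₀)/m'(R₀) > (2/3)√Δ, one has: (i) ∂_R r(R₀, t) > 0 for all t ≤ α(R₀) (no shell-crossing before the bounce at shell R₀), and (ii) there exists t* with α(R₀) < t* < α(R₀) + (2/3)√Δ such that ∂_R r(R₀, t*) = 0 while ∂_R m(R₀) > 0, i.e. a shell-crossing singularity forms at shell R₀ within a time (2/3)√Δ after its bounce. -/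

import Mathlib

/-!
Writing `r = (2Gm)^{1/3} q^{1/3}` with `q = (9/4)(t - α)^2 + Δ`, the derivative `∂_R r` is a
positive multiple of `m' q + m q' = m' q - (9/2) m α' (t - α)`, a quadratic in `τ = t - α`.
For `τ ≤ 0` it is positive, since `m' > 0` (as `ρ > 0`) and `m α' > 0` (by the hypothesis).
At `τ = 0` it equals `m' Δ > 0` and at `τ = (2/3)√Δ` it equals `2Δ m' - 3√Δ m α'`, which is
negative exactly when `m α' / m' > (2/3)√Δ`; the intermediate value theorem gives the root.
-/

open Real MeasureTheory intervalIntegral Set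

lemma HasDerivAt.rpow_mul_rpow {u v : ℝ → ℝ} {u' v' x : ℝ} (hu : HasDerivAt u u' x)
    (hv : HasDerivAt v v' x) (hu0 : 0 < u x) (hv0 : 0 < v x) (p : ℝ) :
    HasDerivAt (fun y => u y ^ p * v y ^ p)
      (p * (u x * v x) ^ (p - 1) * (u' * v x + u x * v')) x := by
  refine ((hu.rpow_const (Or.inl hu0.ne')).mul (hv.rpow_const (Or.inl hv0.ne'))).congr_deriv ?_
  rw [mul_rpow hu0.le hv0.le, rpow_sub_one hu0.ne', rpow_sub_one hv0.ne']
  field_simp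

noncomputable def shellCrossingPoly (m m' a' Δ τ : ℝ) : ℝ :=
  m' * ((9 / 4) * τ ^ 2 + Δ) - (9 / 2) * m * a' * τ

section ShellCrossingPoly

variable {m m' a' Δ : ℝ}

lemma shellCrossingPoly_pos_of_nonpos (hm' : 0 < m') (hΔ : 0 < Δ) (ha' : 0 ≤ m * a') {τ : ℝ}
    (hτ : τ ≤ 0) : 0 < shellCrossingPoly m m' a' Δ τ := by
  unfold shellCrossingPoly
  nlinarith [mul_pos hm' (by positivity : 0 < (9 / 4) * τ ^ 2 + Δ),
    mul_nonneg ha' (neg_nonneg.2 hτ)]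

lemma exists_shellCrossingPoly_eq_zero (hm' : 0 < m') (hΔ : 0 < Δ)
    (h : (2 / 3) * √Δ * m' < m * a') :
    ∃ τ ∈ Ioo 0 ((2 / 3) * √Δ), shellCrossingPoly m m' a' Δ τ = 0 := by
  have hsqrt : 0 < √Δ := sqrt_pos.2 hΔ
  have hsq : √Δ ^ 2 = Δ := sq_sqrt hΔ.le
  have h0 : 0 < shellCrossingPoly m m' a' Δ 0 := by simp [shellCrossingPoly, mul_pos hm' hΔ]
  have h1 : shellCrossingPoly m m' a' Δ ((2 / 3) * √Δ) < 0 := by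
    unfold shellCrossingPoly
    nlinarith [mul_lt_mul_of_pos_left h hsqrt]
  exact intermediate_value_Ioo' (by positivity)
    (by unfold shellCrossingPoly; fun_prop) ⟨h1, h0⟩

end ShellCrossingPoly

lemma hasDerivAt_shellRadius {G Δ m' a' R t : ℝ} {m α : ℝ → ℝ} (hG : 0 < G) (hΔ : 0 < Δ)
    (hm : HasDerivAt m m' R) (hα : HasDerivAt α a' R) (hmR : 0 < m R) :
    HasDerivAt
      (fun R => (2 * G * m R) ^ ((1 : ℝ) / 3) * ((9 / 4) * (t - α R) ^ 2 + Δ) ^ ((1 : ℝ) / 3))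
      ((1 / 3) * (2 * G * m R * ((9 / 4) * (t - α R) ^ 2 + Δ)) ^ ((1 : ℝ) / 3 - 1) *
        (2 * G * shellCrossingPoly (m R) m' a' Δ (t - α R))) R := by
  have hq : HasDerivAt (fun R => (9 / 4) * (t - α R) ^ 2 + Δ)
      ((9 / 4) * (2 * (t - α R) ^ 1 * (0 - a'))) R :=
    ((((hasDerivAt_const R t).sub hα).pow 2).const_mul (9 / 4)).add_const Δ
  refine ((hm.const_mul (2 * G)).rpow_mul_rpow hq (by positivity) (by positivity) _).congr_deriv ?_
  unfold shellCrossingPoly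
  ring

lemma sign_deriv_shellRadius {G Δ m' a' R t : ℝ} {m α : ℝ → ℝ} (hG : 0 < G) (hΔ : 0 < Δ)
    (hm : HasDerivAt m m' R) (hα : HasDerivAt α a' R) (hmR : 0 < m R) :
    SignType.sign (deriv (fun R =>
        (2 * G * m R) ^ ((1 : ℝ) / 3) * ((9 / 4) * (t - α R) ^ 2 + Δ) ^ ((1 : ℝ) / 3)) R) =
      SignType.sign (shellCrossingPoly (m R) m' a' Δ (t - α R)) := by
  rw [(hasDerivAt_shellRadius hG hΔ hm hα hmR).deriv, sign_mul, sign_mul, sign_mul,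
    sign_pos (by norm_num : (0 : ℝ) < 1 / 3), sign_pos (by positivity), sign_pos (by positivity),
    one_mul, one_mul, one_mul]

section ShellMass

variable {ρ : ℝ → ℝ} {R : ℝ}

lemma hasDerivAt_shellMass (hρ : ContinuousOn ρ (Ici 0)) (hR : 0 < R) :
    HasDerivAt (fun R => 4 * π * ∫ s in (0 : ℝ)..R, ρ s * s ^ 2) (4 * π * (ρ R * R ^ 2)) R := by
  have hf : ContinuousOn (fun s => ρ s * s ^ 2) (Ici 0) := hρ.mul (continuous_pow 2).continuousOn
  refine (integral_hasDerivAt_right ?_ ?_ (hf.continuousAt (Ici_mem_nhds hR))).const_mul _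
  · exact (hf.mono (by rw [uIcc_of_le hR.le]; exact Icc_subset_Ici_self)).intervalIntegrable
  · exact (hf.mono (Ioi_subset_Ici le_rfl)).stronglyMeasurableAtFilter isOpen_Ioi R hR

lemma shellMass_pos (hρ : ContinuousOn ρ (Ici 0)) (hρpos : ∀ R, 0 ≤ R → 0 < ρ R) (hR : 0 < R) :
    0 < 4 * π * ∫ s in (0 : ℝ)..R, ρ s * s ^ 2 := by
  have hf : ContinuousOn (fun s => ρ s * s ^ 2) (Icc 0 R) :=
    (hρ.mono Icc_subset_Ici_self).mul (continuous_pow 2).continuousOn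
  have hI : 0 < ∫ s in (0 : ℝ)..R, ρ s * s ^ 2 :=
    intervalIntegral_pos_of_pos_on (hf.intervalIntegrable_of_Icc hR.le)
      (fun s hs => mul_pos (hρpos s hs.1.le) (pow_pos hs.1 2)) hR
  positivity

end ShellMass

theorem shell_crossing_after_bounce
    (G Δ : ℝ) (hG : 0 < G) (hΔ : 0 < Δ)
    (ρ m α : ℝ → ℝ) (r : ℝ → ℝ → ℝ)
    (hρc : ContinuousOn ρ (Set.Ici 0))
    (hρpos : ∀ R, 0 ≤ R → 0 < ρ R)
    (hm : ∀ R, m R = 4 * π * ∫ s in (0:ℝ)..R, ρ s * s ^ 2)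
    (hr : ∀ R t, r R t =
      (2 * G * m R) ^ ((1:ℝ)/3) * ((9/4) * (t - α R) ^ 2 + Δ) ^ ((1:ℝ)/3))
    (R₀ : ℝ) (hR₀ : 0 < R₀)
    (hineq : (2 / 3) * Real.sqrt Δ < m R₀ * deriv α R₀ / deriv m R₀) :
    (∀ t, t ≤ α R₀ → 0 < deriv (fun R => r R t) R₀) ∧
    (∃ ts, α R₀ < ts ∧ ts < α R₀ + (2 / 3) * Real.sqrt Δ ∧
      deriv (fun R => r R ts) R₀ = 0 ∧ 0 < deriv m R₀) := by
  have hmd : HasDerivAt m (4 * π * (ρ R₀ * R₀ ^ 2)) R₀ := by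
    rw [show m = _ from funext hm]
    exact hasDerivAt_shellMass hρc hR₀
  have hm' : 0 < deriv m R₀ := by
    rw [hmd.deriv]
    have := hρpos R₀ hR₀.le
    positivity
  have hmR₀ : 0 < m R₀ := hm R₀ ▸ shellMass_pos hρc hρpos hR₀
  rw [lt_div_iff₀ hm'] at hineq
  have hsqrt : 0 < √Δ := sqrt_pos.2 hΔ
  -- `deriv α R₀` is not a junk value: were it `0`, `hineq` would fail.
  have hα : HasDerivAt α (deriv α R₀) R₀ := by
    refine (differentiableAt_of_deriv_ne_zero fun h => ?_).hasDerivAt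
    rw [h, mul_zero] at hineq
    nlinarith
  have hsign (t : ℝ) :=
    sign_deriv_shellRadius (t := t) hG hΔ hmd.differentiableAt.hasDerivAt hα hmR₀
  simp only [hr]
  refine ⟨fun t ht => sign_eq_one_iff.1 ?_, ?_⟩
  · rw [hsign, sign_eq_one_iff]
    exact shellCrossingPoly_pos_of_nonpos hm' hΔ (by nlinarith) (by linarith)
  · obtain ⟨τ, ⟨hτ0, hτ1⟩, hτ⟩ := exists_shellCrossingPoly_eq_zero hm' hΔ hineq
    refine ⟨α R₀ + τ, by linarith, by linarith, _root_.sign_eq_zero_iff.1 ?_, hm'⟩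
    rw [hsign, add_sub_cancel_left, _root_.sign_eq_zero_iff, hτ]
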